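/- In the Black-Scholes setting, for fixed S, K, T > 0 and r, q ∈ ℝ, the call price tends to its intrinsic value as volatility vanishes and to the discounted spot as volatility explodes: lim_{σ → 0+} C(S,K,T,r,q,σ) = max(S·exp(−q·T) − K·exp(−r·T), 0) and lim_{σ → ∞} C(S,K,T,r,q,σ) = S·exp(−q·T). -/

import Mathlib

/-!
With total volatility `s = σ √T`, discounted spot `A = S e^{-qT}`, discounted strike
`B = K e^{-rT}` and `m = log (A / B)`, one has `d₁ = m / s + s / 2` and `d₂ = m / s - s / 2`.
As `s → ∞`, `d₁ → ∞` and `d₂ → -∞`, so the price tends to `A`. As `s → 0⁺`, both `d₁` and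
`d₂` tend to `+∞`, `-∞` or `0` according to the sign of `m`, which is the sign of `A - B`;
in each case the price tends to `(A - B)⁺`.
-/

open Real

/-- Standard normal density. -/
noncomputable def stdNormalPdf (x : ℝ) : ℝ := Real.exp (-x ^ 2 / 2) / Real.sqrt (2 * Real.pi)

/-- Standard normal cumulative distribution function. -/
noncomputable def stdNormalCdf (x : ℝ) : ℝ := ∫ t in Set.Iic x, stdNormalPdf t

/-- Black-Scholes `d₁`. -/
noncomputable def bsD1 (S K T r q σ : ℝ) : ℝ :=
  (Real.log (S / K) + (r - q + σ ^ 2 / 2) * T) / (σ * Real.sqrt T)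

/-- Black-Scholes `d₂`. -/
noncomputable def bsD2 (S K T r q σ : ℝ) : ℝ := bsD1 S K T r q σ - σ * Real.sqrt T

/-- Black-Scholes call option price. -/
noncomputable def bsCall (S K T r q σ : ℝ) : ℝ :=
  S * Real.exp (-q * T) * stdNormalCdf (bsD1 S K T r q σ) -
    K * Real.exp (-r * T) * stdNormalCdf (bsD2 S K T r q σ)

open Filter
open Topology MeasureTheory ProbabilityTheory

lemma stdNormalPdf_eq_gaussianPDFReal : stdNormalPdf = gaussianPDFReal 0 1 := by
  ext x
  simp [stdNormalPdf, gaussianPDFReal, div_eq_inv_mul]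

lemma stdNormalCdf_eq_cdf_gaussianReal : stdNormalCdf = cdf (gaussianReal 0 1) := by
  ext x
  rw [cdf_eq_real, measureReal_def, gaussianReal_apply_eq_integral _ one_ne_zero,
    ENNReal.toReal_ofReal (setIntegral_nonneg measurableSet_Iic
      fun _ _ => gaussianPDFReal_nonneg _ _ _), stdNormalCdf, stdNormalPdf_eq_gaussianPDFReal]

lemma tendsto_stdNormalCdf_atTop : Tendsto stdNormalCdf atTop (𝓝 1) :=
  stdNormalCdf_eq_cdf_gaussianReal ▸ tendsto_cdf_atTop _

lemma tendsto_stdNormalCdf_atBot : Tendsto stdNormalCdf atBot (𝓝 0) :=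
  stdNormalCdf_eq_cdf_gaussianReal ▸ tendsto_cdf_atBot _

lemma continuous_stdNormalCdf : Continuous stdNormalCdf := by
  have hpdf : Integrable stdNormalPdf :=
    stdNormalPdf_eq_gaussianPDFReal ▸ integrable_gaussianPDFReal 0 1
  have hprim (x : ℝ) : stdNormalCdf x = stdNormalCdf 0 + ∫ t in (0 : ℝ)..x, stdNormalPdf t := by
    rw [← intervalIntegral.integral_Iic_sub_Iic hpdf.integrableOn hpdf.integrableOn]
    simp [stdNormalCdf]
  rw [funext hprim]
  exact continuous_const.add (hpdf.continuous_primitive 0)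

/-- The call price in terms of the discounted spot `A`, the discounted strike `B`, the
log-moneyness `m = log (A / B)` and the total volatility `s = σ √T`. -/
noncomputable def blackCall (A B m s : ℝ) : ℝ :=
  A * stdNormalCdf (m / s + s / 2) - B * stdNormalCdf (m / s - s / 2)

lemma bsCall_eq_blackCall (S K r q σ : ℝ) {T : ℝ} (hT : 0 ≤ T) :
    bsCall S K T r q σ = blackCall (S * Real.exp (-q * T)) (K * Real.exp (-r * T))
      (Real.log (S / K) + (r - q) * T) (σ * √T) := by
  have hd1 : bsD1 S K T r q σ = (Real.log (S / K) + (r - q) * T) / (σ * √T) + σ * √T / 2 := by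
    rcases eq_or_ne (σ * √T) 0 with h | h
    · simp [bsD1, h]
    · rw [bsD1, div_add' _ _ _ h]
      congr 1
      linear_combination -(σ ^ 2 / 2) * Real.sq_sqrt hT
  have hd2 : bsD2 S K T r q σ = (Real.log (S / K) + (r - q) * T) / (σ * √T) - σ * √T / 2 := by
    rw [bsD2, hd1]
    ring
  rw [bsCall, blackCall, hd1, hd2]

lemma tendsto_blackCall_atTop (A B m : ℝ) : Tendsto (blackCall A B m) atTop (𝓝 A) := by
  have hm : Tendsto (fun s : ℝ => m / s) atTop (𝓝 0) := tendsto_const_nhds.div_atTop tendsto_id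
  have hs : Tendsto (fun s : ℝ => s / 2) atTop atTop := tendsto_id.atTop_div_const two_pos
  have h₁ := tendsto_stdNormalCdf_atTop.comp (hm.add_atTop hs)
  have h₂ := tendsto_stdNormalCdf_atBot.comp (hm.add_atBot (tendsto_neg_atTop_atBot.comp hs))
  have h := (h₁.const_mul A).sub (h₂.const_mul B)
  rwa [mul_one, mul_zero, sub_zero] at h

lemma tendsto_blackCall_nhdsGT_zero {A B m : ℝ} (hB : 0 ≤ B) (hAB : A = B * Real.exp m) :
    Tendsto (blackCall A B m) (𝓝[>] 0) (𝓝 (max (A - B) 0)) := by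
  have hs : Tendsto (fun s : ℝ => s / 2) (𝓝[>] 0) (𝓝 0) := by
    simpa using ((continuous_id.div_const (2 : ℝ)).tendsto 0).mono_left nhdsWithin_le_nhds
  have hlim {L : ℝ} (h₁ : Tendsto (fun s => stdNormalCdf (m / s + s / 2)) (𝓝[>] 0) (𝓝 L))
      (h₂ : Tendsto (fun s => stdNormalCdf (m / s - s / 2)) (𝓝[>] 0) (𝓝 L)) :
      Tendsto (blackCall A B m) (𝓝[>] 0) (𝓝 ((A - B) * L)) := by
    have h := (h₁.const_mul A).sub (h₂.const_mul B)
    rwa [← sub_mul] at h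
  rcases lt_trichotomy m 0 with hm | rfl | hm
  · have hd : Tendsto (fun s => m / s) (𝓝[>] 0) atBot :=
      tendsto_inv_nhdsGT_zero.const_mul_atTop_of_neg hm
    have hBA : A ≤ B := hAB ▸ mul_le_of_le_one_right hB (Real.exp_le_one_iff.2 hm.le)
    simpa [max_eq_right (sub_nonpos.2 hBA)] using
      hlim (tendsto_stdNormalCdf_atBot.comp (hd.atBot_add hs))
        (tendsto_stdNormalCdf_atBot.comp (hd.atBot_add hs.neg))
  · have hBA : A = B := by simpa using hAB
    have hN := continuous_stdNormalCdf.tendsto 0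
    simpa [hBA] using
      hlim (hN.comp (by simpa using hs)) (hN.comp (by simpa using hs.neg))
  · have hd : Tendsto (fun s => m / s) (𝓝[>] 0) atTop :=
      tendsto_inv_nhdsGT_zero.const_mul_atTop hm
    have hBA : B ≤ A := hAB ▸ le_mul_of_one_le_right hB (Real.one_le_exp_iff.2 hm.le)
    simpa [max_eq_left (sub_nonneg.2 hBA)] using
      hlim (tendsto_stdNormalCdf_atTop.comp (hd.atTop_add hs))
        (tendsto_stdNormalCdf_atTop.comp (hd.atTop_add hs.neg))

/-- Limits of the Black-Scholes call price in the volatility: as `σ → 0+` the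
price tends to the intrinsic value, and as `σ → ∞` it tends to the discounted
spot `S·e^{-qT}`. -/
theorem bsCall_vol_limits (S K T r q : ℝ) (hS : 0 < S) (hK : 0 < K) (hT : 0 < T) :
    Tendsto (fun σ => bsCall S K T r q σ) (nhdsWithin 0 (Set.Ioi 0))
      (nhds (max (S * Real.exp (-q * T) - K * Real.exp (-r * T)) 0)) ∧
    Tendsto (fun σ => bsCall S K T r q σ) atTop (nhds (S * Real.exp (-q * T))) := by
  have hAB : S * Real.exp (-q * T) =
      K * Real.exp (-r * T) * Real.exp (Real.log (S / K) + (r - q) * T) := by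
    rw [Real.exp_add, Real.exp_log (div_pos hS hK), mul_mul_mul_comm, ← Real.exp_add]
    field_simp
    ring_nf
  have hsqrt : 0 < √T := Real.sqrt_pos.2 hT
  have h_nhdsGT : Tendsto (fun σ => σ * √T) (𝓝[>] 0) (𝓝[>] 0) :=
    tendsto_nhdsWithin_iff.2
      ⟨by simpa using ((continuous_mul_const √T).tendsto 0).mono_left nhdsWithin_le_nhds,
        eventually_nhdsWithin_of_forall fun σ hσ => mul_pos hσ hsqrt⟩
  simp only [bsCall_eq_blackCall _ _ _ _ _ hT.le]
  exact ⟨(tendsto_blackCall_nhdsGT_zero (by positivity) hAB).comp h_nhdsGT,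
    (tendsto_blackCall_atTop _ _ _).comp (tendsto_id.atTop_mul_const hsqrt)⟩
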